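/- Let λ be a partition with at most n parts, set α_i = λ_i − i + 1, let 0 ≤ k ≤ n, and let Y = y_1+⋯+y_m be an auxiliary alphabet of independent variables. Then R(X_k, X_k^c)·S_λ[Y+X] = det(M), where M is the n×n matrix whose entry in row i and column j is S_{α_i+n−k−1+j}[Y+X_k] for 1 ≤ j ≤ k, and S_{α_i+j−1}[Y+X_k^c] for k+1 ≤ j ≤ n. -/

import Mathlib

open MvPolynomial Finset

set_option synthInstance.maxHeartbeats 1000000
set_option maxHeartbeats 1000000

noncomputable section

/-- The base field `ℚ(q,t)`. -/
abbrev Fqt : Type := FractionRing (MvPolynomial (Fin 2) ℚ)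

/-- The element `q` of `ℚ(q,t)`. -/
def qF : Fqt := algebraMap (MvPolynomial (Fin 2) ℚ) Fqt (X 0)

/-- The element `t` of `ℚ(q,t)`. -/
def tF : Fqt := algebraMap (MvPolynomial (Fin 2) ℚ) Fqt (X 1)

lemma qF_ne_zero : qF ≠ 0 := by
  have h : Function.Injective (algebraMap (MvPolynomial (Fin 2) ℚ) Fqt) :=
    IsFractionRing.injective _ _
  intro hq
  exact MvPolynomial.X_ne_zero (R := ℚ) (0 : Fin 2) (h (by rw [map_zero]; exact hq))

/-- Polynomials in `N` variables `x_1, …, x_N` over `ℚ(q,t)`. -/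
abbrev Rg (N : ℕ) := MvPolynomial (Fin N) Fqt

/-- The field of rational functions in `x_1, …, x_N` over `ℚ(q,t)`. -/
abbrev Kg (N : ℕ) := FractionRing (Rg N)

/-- The variable `x_i` (1-based indexing), as an element of `Kg N`. -/
def xv (N i : ℕ) : Kg N :=
  if h : 1 ≤ i ∧ i ≤ N then algebraMap (Rg N) (Kg N) (X ⟨i - 1, by omega⟩) else 0

/-- A scalar from `ℚ(q,t)` viewed inside `Kg N`. -/
def cK (N : ℕ) (c : Fqt) : Kg N := algebraMap (Rg N) (Kg N) (C c)

/-- The element `q` of `Kg N`. -/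
def qK (N : ℕ) : Kg N := cK N qF

/-- The element `t` of `Kg N`. -/
def tK (N : ℕ) : Kg N := cK N tF

/-- The field automorphism of `Kg N` exchanging two variables. -/
def swapK (N : ℕ) (a b : Fin N) : Kg N ≃+* Kg N :=
  IsFractionRing.ringEquivOfRingEquiv
    (AlgEquiv.toRingEquiv (renameEquiv Fqt (Equiv.swap a b)))

/-- `swapv N a b` exchanges the variables `x_a` and `x_b` (1-based). -/
def swapv (N a b : ℕ) (f : Kg N) : Kg N :=
  if h : 1 ≤ a ∧ a ≤ N ∧ 1 ≤ b ∧ b ≤ N then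
    swapK N ⟨a - 1, by omega⟩ ⟨b - 1, by omega⟩ f else f

/-- The divided difference `∂_i` (1-based): `∂_i f = (f - σ_i f)/(x_i - x_{i+1})`. -/
def dd (N i : ℕ) (f : Kg N) : Kg N :=
  if 1 ≤ i ∧ i + 1 ≤ N then (f - swapv N i (i + 1) f) / (xv N i - xv N (i + 1)) else 0

/-- The algebra endomorphism of `Rg N` scaling the variable `l` by the scalar `c`. -/
def scaleHom (N : ℕ) (l : Fin N) (c : Fqt) : Rg N →ₐ[Fqt] Rg N :=
  aeval (fun i => if i = l then C c * X i else X i)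

lemma scaleHom_comp (N : ℕ) (l : Fin N) (c : Fqt) (hc : c ≠ 0) :
    (scaleHom N l c).comp (scaleHom N l c⁻¹) = AlgHom.id Fqt (Rg N) := by
  apply algHom_ext
  intro i
  by_cases h : i = l
  · subst h
    simp only [scaleHom, AlgHom.coe_comp, Function.comp_apply, aeval_X, if_pos,
      AlgHom.coe_id, id_eq, map_mul, aeval_C, algebraMap_eq, if_true]
    rw [← mul_assoc, ← C_mul, inv_mul_cancel₀ hc, C_1, one_mul]
  · simp [scaleHom, h]

/-- The algebra automorphism of `Rg N` scaling the variable `l` by a nonzero scalar `c`. -/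
def scaleEquiv (N : ℕ) (l : Fin N) (c : Fqt) (hc : c ≠ 0) : Rg N ≃ₐ[Fqt] Rg N :=
  AlgEquiv.ofAlgHom (scaleHom N l c) (scaleHom N l c⁻¹)
    (scaleHom_comp N l c hc)
    (by simpa [inv_inv] using scaleHom_comp N l c⁻¹ (inv_ne_zero hc))

/-- The field automorphism `Θ_l` of `Kg N`, substituting `x_l ↦ q·x_l`. -/
def thetaK (N : ℕ) (l : Fin N) : Kg N ≃+* Kg N :=
  IsFractionRing.ringEquivOfRingEquiv
    (AlgEquiv.toRingEquiv (scaleEquiv N l qF qF_ne_zero))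

/-- `Θ_l` with 1-based indexing: substitutes `x_l ↦ q x_l`. -/
def thetav (N l : ℕ) (f : Kg N) : Kg N :=
  if h : 1 ≤ l ∧ l ≤ N then thetaK N ⟨l - 1, by omega⟩ f else f

/-- The list (alphabet) `x_a, x_{a+1}, …, x_b`. -/
def XL (N a b : ℕ) : List (Kg N) := (List.range' a (b + 1 - a)).map (xv N)

/-- Scaling an alphabet by a constant. -/
def scaleL {A : Type*} [Mul A] (c : A) (L : List A) : List A := L.map (c * ·)

/-- Complete homogeneous function `h_j` of a (listed) alphabet. -/
def hfun {A : Type*} [CommRing A] : List A → ℕ → A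
  | _, 0 => 1
  | [], _ + 1 => 0
  | a :: l, j + 1 => hfun l (j + 1) + a * hfun (a :: l) j
  termination_by l j => (l.length, j)

/-- Elementary symmetric function `e_j` of a (listed) alphabet. -/
def efun {A : Type*} [CommRing A] : List A → ℕ → A
  | _, 0 => 1
  | [], _ + 1 => 0
  | a :: l, j + 1 => efun l (j + 1) + a * efun l j

/-- `S_j[P − M]`, the complete function of degree `j ∈ ℤ` of the difference of
two alphabets: `S_j[P−M] = Σ_{a+b=j} h_a[P]·(−1)^b e_b[M]`, and `0` for `j < 0`. -/
def SJ {A : Type*} [CommRing A] (P M : List A) (j : ℤ) : A :=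
  if 0 ≤ j then
    ∑ p ∈ Finset.range (j.toNat + 1), hfun P (j.toNat - p) * (-1 : A) ^ p * efun M p
  else 0

/-- `e_m[L]` with integer index (`0` for `m < 0`). -/
def EJ {A : Type*} [CommRing A] (L : List A) (m : ℤ) : A :=
  if 0 ≤ m then efun L m.toNat else 0

/-- The Jacobi–Trudi determinant: the Schur function `S_λ[P−M]` for a partition
given as a vector `lam : Fin n → ℕ`. -/
def schurJT {A : Type*} [CommRing A] (n : ℕ) (lam : Fin n → ℕ) (P M : List A) : A :=
  (Matrix.of fun i j : Fin n => SJ P M ((lam i : ℤ) - (i : ℕ) + (j : ℕ))).det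

/-- Skew Schur function `S_{α/η}[P−M]` for integer vectors `α, η` of length `k`. -/
def schurVec {A : Type*} [CommRing A] (k : ℕ) (α η : Fin k → ℤ) (P M : List A) : A :=
  (Matrix.of fun i j : Fin k => SJ P M (α i - (i : ℕ) + (j : ℕ) - η j)).det

/-- Power sum `p_i = x_1^i + ⋯ + x_N^i`. -/
def pK (N i : ℕ) : Kg N := ∑ l ∈ Finset.Icc 1 N, xv N l ^ i

/-- The modified complete functions `g_j = S_j[X(t−1)/(q−1)]`, defined through the
recurrence `j·g_j = Σ_{i=1}^{j} ((t^i−1)/(q^i−1)) p_i g_{j−i}`, `g_0 = 1`. -/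
def gK (N : ℕ) : ℕ → Kg N
  | 0 => 1
  | j + 1 =>
    ((j : Kg N) + 1)⁻¹ *
      ∑ i ∈ (Finset.Icc 1 (j + 1)).attach,
        ((tK N ^ (i : ℕ) - 1) / (qK N ^ (i : ℕ) - 1)) * pK N (i : ℕ) * gK N (j + 1 - (i : ℕ))
  termination_by j => j
  decreasing_by
    have := Finset.mem_Icc.mp i.2
    omega

/-- `g_m` with integer index (`0` for `m < 0`). -/
def gz (N : ℕ) (m : ℤ) : Kg N := if 0 ≤ m then gK N m.toNat else 0

/-- The modified Schur function `S_λ[X^{tq}]` as a `k×k` Jacobi–Trudi determinant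
in the `g_j`'s, for a partition `lam` with at most `k` parts. -/
def schurG (N k : ℕ) (lam : Fin k → ℕ) : Kg N :=
  (Matrix.of fun i j : Fin k => gz N ((lam i : ℤ) - (i : ℕ) + (j : ℕ))).det

/-- `∂_b ∘ ⋯ ∘ ∂_{a+1} ∘ ∂_a` (i.e. `∂_a` applied first). -/
def ddUp (N a b : ℕ) (f : Kg N) : Kg N :=
  (List.range' a (b + 1 - a)).foldl (fun g i => dd N i g) f

/-- `∂_a ∘ ∂_{a+1} ∘ ⋯ ∘ ∂_b` (i.e. `∂_b` applied first). -/
def ddDown (N a b : ℕ) (f : Kg N) : Kg N :=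
  (List.range' a (b + 1 - a)).reverse.foldl (fun g i => dd N i g) f

/-- `∂_{(k|n−k)} = (∂_{n−k}⋯∂_1)(∂_{n−k+1}⋯∂_2)⋯(∂_{n−1}⋯∂_k)`. -/
def ddSyl (N n k : ℕ) (f : Kg N) : Kg N :=
  (List.range k).foldl (fun g j => ddUp N (k - j) (n - 1 - j) g) f

/-- `∂_{ω(k)} = (∂_{k−1})(∂_{k−2}∂_{k−1})⋯(∂_1⋯∂_{k−1})`, the divided difference
of the longest permutation of `S_k`. -/
def ddOmega (N k : ℕ) (f : Kg N) : Kg N :=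
  (List.range (k - 1)).foldl (fun g j => ddDown N (j + 1) (k - 1) g) f

/-- The resultant `R(P,Q) = Π_{a∈P, b∈Q} (a−b)` of two (listed) alphabets. -/
def resL {A : Type*} [CommRing A] (P Q : List A) : A :=
  (P.map (fun a => (Q.map (fun b => a - b)).prod)).prod

/-- `χ^{(k)}_{(1|n−k)} f = ∂_{n−1}⋯∂_k ( R(x_k, X_k^c/t) · f )`. -/
def chi1 (N n k : ℕ) (f : Kg N) : Kg N :=
  ddUp N k (n - 1) (resL [xv N k] (scaleL (tK N)⁻¹ (XL N (k + 1) n)) * f)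

/-- `χ_{(k|n−k)} f = ∂_{(k|n−k)} ( R(X_k, X_k^c/t) · f )`. -/
def chiSyl (N n k : ℕ) (f : Kg N) : Kg N :=
  ddSyl N n k (resL (XL N 1 k) (scaleL (tK N)⁻¹ (XL N (k + 1) n)) * f)

/-- `χ_{ω(k)} f = ∂_{ω(k)} ( Π_{1≤i<j≤k} (x_i − x_j/t) · f )`. -/
def chiOmega (N k : ℕ) (f : Kg N) : Kg N :=
  ddOmega N k
    ((∏ i ∈ Finset.Icc 1 k, ∏ j ∈ Finset.Ioc i k, (xv N i - (tK N)⁻¹ * xv N j)) * f)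

/-- `Θ_{i_k}⋯Θ_{i_1}` for a set `I = {i_1 < ⋯ < i_k}` (smallest index applied first). -/
def thetaSet (N : ℕ) (I : Finset ℕ) (f : Kg N) : Kg N :=
  (I.sort (· ≤ ·)).foldl (fun g l => thetav N l g) f

/-- The Macdonald operator `M_l` in the variables `{x_i : i ∈ I}`:
`M_l^{(I)} = t^{l(l−1)/2} Σ_{J⊆I, |J|=l} R(tX_J, X_I∖X_J) Θ_J`. -/
def MacOp (N : ℕ) (I : Finset ℕ) (l : ℕ) (f : Kg N) : Kg N :=
  tK N ^ (l * (l - 1) / 2) *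
    ∑ J ∈ I.powersetCard l,
      (∏ a ∈ J, ∏ b ∈ I \ J, (tK N * xv N a - xv N b)) * thetaSet N J f

/-- The creation operator
`B_k^{(n)} = Σ_{|I|=k} Σ_{l=0}^{k} (−t)^l x^I (R(X_I,X_I^c/t)/R(X_I,X_I^c)) M_l^{(I)}`. -/
def BOp (N n k : ℕ) (f : Kg N) : Kg N :=
  ∑ I ∈ (Finset.Icc 1 n).powersetCard k, ∑ l ∈ Finset.range (k + 1),
    (-(tK N)) ^ l * (∏ i ∈ I, xv N i) *
      ((∏ a ∈ I, ∏ b ∈ Finset.Icc 1 n \ I, (xv N a - (tK N)⁻¹ * xv N b)) /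
        (∏ a ∈ I, ∏ b ∈ Finset.Icc 1 n \ I, (xv N a - xv N b))) *
      MacOp N I l f

/-- `ε(μ,α)`: the sign of the unique permutation `σ` with
`α_i = μ_{σ(i)} − σ(i) + i` for all `i`, and `0` if no such `σ` exists. -/
def eps (n : ℕ) (μ α : Fin n → ℕ) : ℤ :=
  if h : ∃ σ : Equiv.Perm (Fin n),
      ∀ i, (α i : ℤ) = (μ (σ i) : ℤ) - ((σ i : ℕ) : ℤ) + (i : ℕ) then
    Equiv.Perm.sign h.choose
  else 0

/-- `[|α|] = q^{α_1} t^{n−1} + q^{α_2} t^{n−2} + ⋯ + q^{α_n}`. -/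
def anorm (N n : ℕ) (α : Fin n → ℕ) : Kg N :=
  ∑ i : Fin n, qK N ^ (α i) * tK N ^ (n - 1 - (i : ℕ))

/-- `[|α|]_{t,q}`, i.e. `anorm` with `q` and `t` interchanged. -/
def anormT (N n : ℕ) (α : Fin n → ℕ) : Kg N :=
  ∑ i : Fin n, tK N ^ (α i) * qK N ^ (n - 1 - (i : ℕ))

/-- The finite set of all distinct rearrangements of a vector `ν ∈ ℕ^n`. -/
def permsOf (n : ℕ) (ν : Fin n → ℕ) : Finset (Fin n → ℕ) :=
  Finset.image (fun σ : Equiv.Perm (Fin n) => ν ∘ σ) Finset.univ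

/-- `[λ]_{μν}(q,t) = Σ_α ε(μ,α)·([|λ|] − [|α|])`, `α` ranging over distinct
rearrangements of `ν`. -/
def brackQT (N n : ℕ) (lam μ ν : Fin n → ℕ) : Kg N :=
  ∑ α ∈ permsOf n ν, (eps n μ α : Kg N) * (anorm N n lam - anorm N n α)

/-- `[λ]_{μν}(t,q)`: the same with `q` and `t` interchanged. -/
def brackTQ (N n : ℕ) (lam μ ν : Fin n → ℕ) : Kg N :=
  ∑ α ∈ permsOf n ν, (eps n μ α : Kg N) * (anormT N n lam - anormT N n α)

/-- The conjugate of a partition, as a vector of prescribed length `b`. -/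
def conjTo (a b : ℕ) (lam : Fin a → ℕ) : Fin b → ℕ :=
  fun j => (Finset.univ.filter (fun i : Fin a => (j : ℕ) + 1 ≤ lam i)).card

/-- Dominance order: `dominatedBy n a b` means `a ≤ b`, i.e.
`a_1 + ⋯ + a_i ≤ b_1 + ⋯ + b_i` for all `i`. -/
def dominatedBy (n : ℕ) (a b : Fin n → ℕ) : Prop :=
  ∀ p : Fin n, ∑ i ∈ Finset.Iic p, a i ≤ ∑ i ∈ Finset.Iic p, b i

/-- The Schur polynomial `S_μ[X_n]` inside `Kg N` (Jacobi–Trudi determinant in the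
complete functions of `x_1, …, x_n`). -/
def schurX (N n : ℕ) (μ : Fin n → ℕ) : Kg N := schurJT n μ (XL N 1 n) []

/-- The monomial symmetric polynomial `m_μ[X_n]` inside `Kg N`. -/
def msym (N n : ℕ) (μ : Fin n → ℕ) : Kg N :=
  ∑ α ∈ permsOf n μ, ∏ i : Fin n, xv N ((i : ℕ) + 1) ^ α i

/-- `t`-factorial `k_t! = t^{−k(k−1)/2} (t)_k/(1−t)^k`. -/
def ktfact (N k : ℕ) : Kg N :=
  tK N ^ (-((k * (k - 1) / 2 : ℕ) : ℤ)) *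
    (∏ i ∈ Finset.Icc 1 k, (1 - tK N ^ i)) / (1 - tK N) ^ k

/-- `Ω_k = σ_1 σ_2 ⋯ σ_{k−1} Θ_k`. -/
def omegaOp (N k : ℕ) (f : Kg N) : Kg N :=
  (List.range (k - 1)).foldl (fun g j => swapv N (k - 1 - j) (k - j) g) (thetav N k f)

/-- `(1−tΩ_k)(1−t²Ω_k)⋯(1−t^kΩ_k)`, composed in the order written
(the factor `(1−t^kΩ_k)` applied first). -/
def creationProd (N k : ℕ) (f : Kg N) : Kg N :=
  (List.range k).foldl (fun g j => g - tK N ^ (k - j) * omegaOp N k g) f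

/-- The exponent vector `(0,…,0,α_1,…,α_n) ∈ ℕ^{2n}` read at (1-based) position `i`. -/
def abar (n : ℕ) (α : Fin n → ℕ) (i : ℕ) : ℕ :=
  if h : n + 1 ≤ i ∧ i ≤ 2 * n then α ⟨i - n - 1, by omega⟩ else 0

/-- `x̄^{ρ−(0,…,0,α_1,…,α_n)} = Π_{i=1}^{2n} (−x_i)^{(i−1) − (0,…,0,α)_i}`. -/
def xbar (n : ℕ) (α : Fin n → ℕ) : Kg (2 * n) :=
  ∏ i ∈ Finset.Icc 1 (2 * n), (-(xv (2 * n) i)) ^ (i - 1 - abar n α i)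

/-- `⟨f⟩_{κν} = Σ_α ∂_ω( x̄^{ρ−(0,…,0,α)} f )·([|κ|]_{t,q} − [|α|]_{t,q})`,
`α` over distinct rearrangements of `ν`. -/
def brackF (n : ℕ) (f : Kg (2 * n)) (κ ν : Fin n → ℕ) : Kg (2 * n) :=
  ∑ α ∈ permsOf n ν,
    ddOmega (2 * n) (2 * n) (xbar n α * f) * (anormT (2 * n) n κ - anormT (2 * n) n α)

/-- The creation operator in `k` variables, `B_k^{(k)} = Σ_{l=0}^k (−t)^l x_1⋯x_k M_l^{(k)}`. -/
def BOpSelf (N k : ℕ) (f : Kg N) : Kg N :=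
  ∑ l ∈ Finset.range (k + 1),
    (-(tK N)) ^ l * (∏ i ∈ Finset.Icc 1 k, xv N i) * MacOp N (Finset.Icc 1 k) l f

/-!
With `f = ∏_{a ∈ X_k} (x - a)` and `g = ∏_{b ∈ X_k^c} (x - b)`, the matrix `M` is the product of
the Jacobi–Trudi matrix `(S_{λ_i - i + p}[Y + X])_{i,p}` with the Sylvester matrix of `f` and `g`,
whose columns hold the coefficients of `x^j g` and `x^j f`. Pairing `S_{r+•}[C]` with the
coefficients of `(x - b) Q` gives the pairing of `S_{r+1+•}[C - b]` with those of `Q`, so the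
column of `x^j g` removes the alphabet `X_k^c` from `Y + X` and the column of `x^j f` removes `X_k`.
Taking determinants, `det Syl(f, g) = Res(f, g) = R(X_k, X_k^c)`.
-/

section CompleteHomogeneous

open PowerSeries

variable {R : Type*} [CommRing R]

lemma SJ_nil (P : List R) (j : ℤ) : SJ P [] j = if 0 ≤ j then hfun P j.toNat else 0 := by
  unfold SJ
  split_ifs <;> simp [Finset.sum_range_succ', efun]

lemma SJ_nil_cons_add_one (a : R) (l : List R) (r : ℤ) :
    SJ (a :: l) [] (r + 1) = SJ l [] (r + 1) + a * SJ (a :: l) [] r := by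
  simp only [SJ_nil]
  rcases lt_trichotomy r (-1) with hr | rfl | hr
  · simp [show ¬ 0 ≤ r + 1 by omega, show ¬ 0 ≤ r by omega]
  · simp [hfun]
  · lift r to ℕ using (by omega)
    simp only [show ((r : ℤ) + 1).toNat = r + 1 by omega, Int.toNat_natCast, hfun]
    simp [show (0 : ℤ) ≤ r + 1 by omega]

def hSeries (l : List R) : R⟦X⟧ := PowerSeries.mk (hfun l)

lemma one_sub_C_mul_X_mul_hSeries_cons (a : R) (l : List R) :
    (1 - PowerSeries.C a * PowerSeries.X) * hSeries (a :: l) = hSeries l := by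
  ext (_ | t)
  · simp [hSeries, hfun]
  · rw [sub_mul, one_mul, map_sub, mul_assoc, PowerSeries.coeff_C_mul, coeff_succ_X_mul]
    simp only [hSeries, coeff_mk, hfun]
    ring

lemma hSeries_mul_prod_one_sub_C_mul_X (l : List R) :
    hSeries l * (l.map fun a => 1 - PowerSeries.C a * PowerSeries.X).prod = 1 := by
  induction l with
  | nil => ext (_ | t) <;> simp [hSeries, hfun, PowerSeries.coeff_one]
  | cons a l ih =>
    rw [List.map_cons, List.prod_cons, mul_left_comm, ← mul_assoc,
      one_sub_C_mul_X_mul_hSeries_cons, ih]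

lemma hfun_perm {l l' : List R} (h : l.Perm l') : hfun l = hfun l' := by
  have hl := hSeries_mul_prod_one_sub_C_mul_X l
  have hl' := hSeries_mul_prod_one_sub_C_mul_X l'
  rw [← (h.map _).prod_eq] at hl'
  have := left_inv_eq_right_inv hl (by rw [mul_comm]; exact hl')
  funext j
  simpa [hSeries] using congrArg (coeff j) this

lemma SJ_nil_perm {l l' : List R} (h : l.Perm l') : SJ l [] = SJ l' [] := by
  funext j
  simp only [SJ_nil, hfun_perm h]

end CompleteHomogeneous

section Umbral

open Polynomial

variable {R : Type*} [CommRing R]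

def umbralEval (h : ℤ → R) : R[X] →ₗ[R] R :=
  Polynomial.lsum fun p => LinearMap.mulLeft R (h p)

lemma umbralEval_monomial (h : ℤ → R) (p : ℕ) (a : R) :
    umbralEval h (monomial p a) = h p * a := by
  simp [umbralEval]

lemma umbralEval_X_mul (h : ℤ → R) (Q : R[X]) :
    umbralEval h (Polynomial.X * Q) = umbralEval (fun r => h (r + 1)) Q := by
  induction Q using Polynomial.induction_on' with
  | add P Q hP hQ => rw [mul_add, map_add, map_add, hP, hQ]
  | monomial p a => rw [X_mul_monomial, umbralEval_monomial, umbralEval_monomial]; push_cast; rfl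

lemma umbralEval_X_sub_C_mul (h : ℤ → R) (b : R) (Q : R[X]) :
    umbralEval h ((Polynomial.X - Polynomial.C b) * Q)
      = umbralEval (fun r => h (r + 1) - b * h r) Q := by
  rw [sub_mul, map_sub, Polynomial.C_mul', map_smul, umbralEval_X_mul, smul_eq_mul]
  simp only [umbralEval, lsum_apply, Polynomial.sum_def, Finset.mul_sum, ← Finset.sum_sub_distrib]
  simp [sub_mul, mul_assoc]

lemma umbralEval_eq_sum_fin (h : ℤ → R) {P : R[X]} {n : ℕ} (hP : P.natDegree < n) :
    umbralEval h P = ∑ p : Fin n, h (p : ℕ) * P.coeff p := by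
  rw [umbralEval, lsum_apply, sum_over_range' _ (by simp) n hP,
    Fin.sum_univ_eq_sum_range (fun p => h p * P.coeff p)]
  rfl

lemma natDegree_list_prod_X_sub_C_le (B : List R) :
    (B.map fun b => Polynomial.X - Polynomial.C b).prod.natDegree ≤ B.length := by
  induction B with
  | nil => simp
  | cons b B ih =>
    rw [List.map_cons, List.prod_cons, List.length_cons, add_comm]
    exact natDegree_mul_le.trans (add_le_add (natDegree_X_sub_C_le b) ih)

lemma umbralEval_SJ_prod_X_sub_C_mul_X_pow (A B : List R) (α : ℤ) (j : ℕ) :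
    umbralEval (fun r => SJ (B ++ A) [] (α + r))
        ((B.map fun b => Polynomial.X - Polynomial.C b).prod * Polynomial.X ^ j)
      = SJ A [] (α + j + B.length) := by
  induction B generalizing α with
  | nil => simp [← monomial_one_right_eq_X_pow, umbralEval_monomial]
  | cons b B ih =>
    have hshift : (fun r => SJ (b :: B ++ A) [] (α + (r + 1)) - b * SJ (b :: B ++ A) [] (α + r))
        = fun r => SJ (B ++ A) [] (α + 1 + r) := by
      funext r
      rw [List.cons_append, ← add_assoc, SJ_nil_cons_add_one, add_right_comm]
      ring
    rw [List.map_cons, List.prod_cons, mul_assoc, umbralEval_X_sub_C_mul, hshift, ih,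
      List.length_cons]
    push_cast
    ring_nf

lemma sum_SJ_mul_coeff_prod_X_sub_C_mul_X_pow {A B C : List R} (hC : C.Perm (B ++ A))
    (α : ℤ) {j n : ℕ} (hn : j + B.length < n) :
    ∑ p : Fin n, SJ C [] (α + (p : ℕ))
        * ((B.map fun b => Polynomial.X - Polynomial.C b).prod * Polynomial.X ^ j).coeff p
      = SJ A [] (α + j + B.length) := by
  have hdeg : ((B.map fun b => Polynomial.X - Polynomial.C b).prod * Polynomial.X ^ j).natDegree
      < n := by
    exact (natDegree_mul_le.trans (add_le_add (natDegree_list_prod_X_sub_C_le B)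
      (natDegree_X_pow_le j))).trans_lt (by omega)
  rw [SJ_nil_perm hC, ← umbralEval_SJ_prod_X_sub_C_mul_X_pow, umbralEval_eq_sum_fin _ hdeg]

end Umbral

section Sylvester

open Polynomial

lemma sylvester_apply_eq_coeff {R : Type*} [CommRing R] {f g : R[X]} {m n : ℕ}
    (hf : f.natDegree ≤ m) (hg : g.natDegree ≤ n) (i c : Fin (m + n)) :
    sylvester f g m n i c
      = if (c : ℕ) < m then (g * Polynomial.X ^ (c : ℕ)).coeff i
        else (f * Polynomial.X ^ ((c : ℕ) - m)).coeff i := by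
  induction c using Fin.addCases with
  | left c =>
    simp only [sylvester, Matrix.of_apply, Fin.addCases_left, Fin.val_castAdd, c.2, if_true,
      coeff_mul_X_pow', Set.mem_Icc, ite_and]
    split_ifs with h₁ h₂ <;> try rfl
    exact (coeff_eq_zero_of_natDegree_lt (by omega)).symm
  | right c =>
    simp only [sylvester, Matrix.of_apply, Fin.addCases_right, Fin.val_natAdd,
      show ¬ m + (c : ℕ) < m by omega, if_false, coeff_mul_X_pow', Set.mem_Icc, ite_and,
      Nat.add_sub_cancel_left]
    split_ifs with h₁ h₂ <;> try rfl
    exact (coeff_eq_zero_of_natDegree_lt (by omega)).symm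

lemma det_sylvester_prod_X_sub_C {K : Type*} [Field K] (P Q : List K) :
    (sylvester (P.map fun a => Polynomial.X - Polynomial.C a).prod
      (Q.map fun b => Polynomial.X - Polynomial.C b).prod P.length Q.length).det = resL P Q := by
  have hprod (L : List K) : (L.map fun a => Polynomial.X - Polynomial.C a).prod
      = ((L : Multiset K).map fun a => Polynomial.X - Polynomial.C a).prod := by simp
  have hdeg (L : List K) : (L.map fun a => Polynomial.X - Polynomial.C a).prod.natDegree
      = L.length := by
    rw [hprod, natDegree_multiset_prod_X_sub_C_eq_card, Multiset.coe_card]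
  have hmonic (L : List K) : (L.map fun a => Polynomial.X - Polynomial.C a).prod.Monic := by
    rw [hprod]
    exact monic_multiset_prod_of_monic _ _ fun a _ => monic_X_sub_C a
  have hsplits (L : List K) : (L.map fun a => Polynomial.X - Polynomial.C a).prod.Splits := by
    rw [hprod]
    exact Splits.multisetProd (by simp [Splits.X_sub_C])
  conv_lhs => rw [← hdeg P, ← hdeg Q]
  rw [← resultant, resultant_eq_prod_roots_sub _ _ (hmonic P) (hmonic Q) (hsplits P) (hsplits Q),
    hprod, hprod, roots_multiset_prod_X_sub_C, roots_multiset_prod_X_sub_C,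
    Multiset.prod_map_product_eq_prod_prod, resL]
  simp

lemma SJ_mul_sylvester_prod_X_sub_C {R : Type*} [CommRing R] {n : ℕ} (Y A B : List R)
    (h : A.length + B.length = n) (α : Fin n → ℤ) :
    Matrix.of (fun i p : Fin n => SJ (Y ++ (A ++ B)) [] (α i + (p : ℕ)))
        * (sylvester (A.map fun a => Polynomial.X - Polynomial.C a).prod
            (B.map fun b => Polynomial.X - Polynomial.C b).prod A.length B.length).submatrix
          (finCongr h.symm) (finCongr h.symm)
      = Matrix.of fun i j : Fin n =>
          if (j : ℕ) < A.length then SJ (Y ++ A) [] (α i + B.length + (j : ℕ))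
          else SJ (Y ++ B) [] (α i + (j : ℕ)) := by
  ext i j
  simp only [Matrix.of_apply, Matrix.mul_apply, Matrix.submatrix_apply,
    sylvester_apply_eq_coeff (natDegree_list_prod_X_sub_C_le A)
      (natDegree_list_prod_X_sub_C_le B), finCongr_apply, Fin.val_cast, mul_ite,
    Finset.sum_ite_irrel]
  split_ifs with hj
  · rw [sum_SJ_mul_coeff_prod_X_sub_C_mul_X_pow (A := Y ++ A)
      (by rw [← List.append_assoc]; exact List.perm_append_comm) _ (by omega)]
    ring_nf
  · rw [sum_SJ_mul_coeff_prod_X_sub_C_mul_X_pow (A := Y ++ B)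
      (List.perm_append_comm_assoc _ _ _) _ (by omega)]
    congr 1
    omega

end Sylvester

lemma XL_length (N a b : ℕ) : (XL N a b).length = b + 1 - a := by
  simp [XL]

lemma XL_append (N : ℕ) {a b c : ℕ} (hab : a ≤ b + 1) (hbc : b ≤ c) :
    XL N a b ++ XL N (b + 1) c = XL N a c := by
  have h := List.range'_append (s := a) (m := b + 1 - a) (n := c - b) (step := 1)
  rw [show a + 1 * (b + 1 - a) = b + 1 by omega, show b + 1 - a + (c - b) = c + 1 - a by omega]
    at h
  rw [XL, XL, XL, ← List.map_append, show c + 1 - (b + 1) = c - b by omega, h]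

theorem stmt4_general (n m k : ℕ) (hkn : k ≤ n) (lam : Fin n → ℕ) :
    resL (XL (n + m) 1 k) (XL (n + m) (k + 1) n) *
        schurJT n lam (XL (n + m) (n + 1) (n + m) ++ XL (n + m) 1 n) []
      = (Matrix.of fun i j : Fin n =>
          if (j : ℕ) < k then
            SJ (XL (n + m) (n + 1) (n + m) ++ XL (n + m) 1 k) []
              ((lam i : ℤ) - (i : ℕ) + ((n - k : ℕ) : ℤ) + (j : ℕ))
          else
            SJ (XL (n + m) (n + 1) (n + m) ++ XL (n + m) (k + 1) n) []
              ((lam i : ℤ) - (i : ℕ) + (j : ℕ))).det := by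
  set A := XL (n + m) 1 k
  set B := XL (n + m) (k + 1) n
  have hA : A.length = k := by simp [A, XL_length]
  have hB : B.length = n - k := by simp [B, XL_length]
  have hdet := congrArg Matrix.det <| SJ_mul_sylvester_prod_X_sub_C (XL (n + m) (n + 1) (n + m))
    A B (by omega) fun i => (lam i : ℤ) - (i : ℕ)
  rw [Matrix.det_mul, Matrix.det_submatrix_equiv_self, det_sylvester_prod_X_sub_C, hA, hB]
    at hdet
  rw [schurJT, ← XL_append _ (by omega) hkn, mul_comm, ← hdet]

/-- formula 2.11: `R(X_k,X_k^c)·S_λ[Y+X]` as an `n×n` determinant,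
with `Y = x_{n+1},…,x_{n+m}` the auxiliary alphabet. -/
theorem stmt4 (n m k : ℕ) (hkn : k ≤ n) (lam : Fin n → ℕ) (hlam : Antitone lam) :
    resL (XL (n + m) 1 k) (XL (n + m) (k + 1) n) *
        schurJT n lam (XL (n + m) (n + 1) (n + m) ++ XL (n + m) 1 n) []
      = (Matrix.of fun i j : Fin n =>
          if (j : ℕ) < k then
            SJ (XL (n + m) (n + 1) (n + m) ++ XL (n + m) 1 k) []
              ((lam i : ℤ) - (i : ℕ) + ((n - k : ℕ) : ℤ) + (j : ℕ))
          else
            SJ (XL (n + m) (n + 1) (n + m) ++ XL (n + m) (k + 1) n) []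
              ((lam i : ℤ) - (i : ℕ) + (j : ℕ))).det :=
  stmt4_general n m k hkn lam

end
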